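/- Let (X,φ) be a topological dynamical system on a compact metric space X (φ a homeomorphism) and m ≥ 2. The Besicovitch m-distance D̄_m^φ(x_1,…,x_m) = limsup_{n→∞} (1/n) Σ_{i=0}^{n-1} D_m(φ^i(x_1),…,φ^i(x_m)) is symmetric, positive semi-definite (D̄_m^φ(x,…,x) = 0), and satisfies the polygon inequality: D̄_m^φ(x) ≤ Σ_{i=1}^m D̄_m^φ(x[i→z]) for all x ∈ X^m and z ∈ X. -/

import Mathlib

open Filter Metric Set

/-- Minimum pairwise distance of an `m`-tuple. -/
noncomputable def Dmin {X : Type*} [MetricSpace X] {m : ℕ} (x : Fin m → X) : ℝ :=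
  sInf {r : ℝ | ∃ i j : Fin m, i < j ∧ r = dist (x i) (x j)}

/-- Maximum pairwise distance of an `m`-tuple. -/
noncomputable def Dmax {X : Type*} [MetricSpace X] {m : ℕ} (x : Fin m → X) : ℝ :=
  sSup {r : ℝ | ∃ i j : Fin m, i < j ∧ r = dist (x i) (x j)}

/-- The Besicovitch `m`-distance of an `m`-tuple under the dynamics `φ`. -/
noncomputable def DBar {X : Type*} [MetricSpace X] {m : ℕ} (φ : X → X) (x : Fin m → X) : ℝ :=
  Filter.limsup (fun n : ℕ => (∑ i ∈ Finset.range n, Dmin (fun j => φ^[i] (x j))) / n)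
    Filter.atTop

section aux
variable {X : Type*} [MetricSpace X] {m : ℕ}

private def DS (x : Fin m → X) : Set ℝ :=
  {r : ℝ | ∃ i j : Fin m, i < j ∧ r = dist (x i) (x j)}

private lemma DS_eq_ne (x : Fin m → X) :
    DS x = {r : ℝ | ∃ i j : Fin m, i ≠ j ∧ r = dist (x i) (x j)} := by
  ext r
  constructor
  · rintro ⟨i, j, hij, rfl⟩; exact ⟨i, j, hij.ne, rfl⟩
  · rintro ⟨i, j, hij, rfl⟩
    rcases hij.lt_or_gt with h | h
    · exact ⟨i, j, h, rfl⟩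
    · exact ⟨j, i, h, dist_comm _ _⟩

private lemma DS_nonempty (hm : 2 ≤ m) (x : Fin m → X) : (DS x).Nonempty := by
  refine ⟨_, ⟨⟨0, by omega⟩, ⟨1, by omega⟩, ?_, rfl⟩⟩
  exact Fin.mk_lt_mk.2 (by omega)

private lemma DS_bddBelow (x : Fin m → X) : BddBelow (DS x) :=
  ⟨0, by rintro r ⟨i, j, hij, rfl⟩; exact dist_nonneg⟩

private lemma Dmin_le (x : Fin m → X) {i j : Fin m} (hij : i ≠ j) :
    Dmin x ≤ dist (x i) (x j) := by
  apply csInf_le (DS_bddBelow x)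
  rw [DS_eq_ne]
  exact ⟨i, j, hij, rfl⟩

private lemma le_Dmin (hm : 2 ≤ m) (x : Fin m → X) {c : ℝ}
    (h : ∀ i j : Fin m, i < j → c ≤ dist (x i) (x j)) : c ≤ Dmin x := by
  apply le_csInf (DS_nonempty hm x)
  rintro r ⟨i, j, hij, rfl⟩; exact h i j hij

private lemma Dmin_nonneg (hm : 2 ≤ m) (x : Fin m → X) : 0 ≤ Dmin x :=
  le_Dmin hm x fun _ _ _ => dist_nonneg

end aux

section aux2
variable {X : Type*} [MetricSpace X] {m : ℕ}

private lemma Dmin_comp_perm (x : Fin m → X) (σ : Equiv.Perm (Fin m)) :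
    Dmin (x ∘ σ) = Dmin x := by
  have : DS (x ∘ σ) = DS x := by
    rw [DS_eq_ne, DS_eq_ne]
    ext r
    constructor
    · rintro ⟨i, j, hij, rfl⟩
      exact ⟨σ i, σ j, fun h => hij (σ.injective h), rfl⟩
    · rintro ⟨i, j, hij, rfl⟩
      refine ⟨σ.symm i, σ.symm j, fun h => hij (by simpa using congrArg σ h), ?_⟩
      simp [Function.comp]
  exact congrArg sInf this

private lemma Dmin_const (hm : 2 ≤ m) (y : X) : Dmin (fun _ : Fin m => y) = 0 := by
  have h1 : Dmin (fun _ : Fin m => y) ≤ 0 := by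
    have := Dmin_le (fun _ : Fin m => y)
      (i := ⟨0, by omega⟩) (j := ⟨1, by omega⟩) (by simp [Fin.ext_iff])
    simpa using this
  exact le_antisymm h1 (Dmin_nonneg hm _)

/-- The key pointwise polygon inequality. -/
private lemma Dmin_polygon (hm : 2 ≤ m) (y : Fin m → X) (z : X) :
    Dmin y ≤ ∑ i : Fin m, Dmin (Function.update y i z) := by
  have hnn : ∀ i ∈ Finset.univ, (0:ℝ) ≤ Dmin (Function.update y i z) :=
    fun i _ => Dmin_nonneg hm _
  obtain ⟨k, -, hk⟩ := Finset.exists_min_image Finset.univ (fun i => dist (y i) z)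
    ⟨⟨0, by omega⟩, Finset.mem_univ _⟩
  simp only [Finset.mem_univ, forall_true_left] at hk
  haveI : Nontrivial (Fin m) := Fin.nontrivial_iff_two_le.mpr hm
  obtain ⟨l, hl⟩ := exists_ne k
  set d := dist (y k) z with hd
  -- generic lower bound on Dmin (update y i z)
  have gen : ∀ (i : Fin m) (c : ℝ), (∀ j : Fin m, j ≠ i → c ≤ dist (y j) z) →
      c ≤ Dmin y → c ≤ Dmin (Function.update y i z) := by
    intro i c hcz hcD
    apply le_Dmin hm
    intro a b hab
    by_cases ha : a = i
    · subst ha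
      rw [Function.update_self, Function.update_of_ne hab.ne', dist_comm]
      exact hcz b hab.ne'
    · rw [Function.update_of_ne ha]
      by_cases hb : b = i
      · subst hb
        rw [Function.update_self]
        exact hcz a ha
      · rw [Function.update_of_ne hb]
        exact hcD.trans (Dmin_le y hab.ne)
  rcases le_or_gt (Dmin y) d with hcase | hcase
  · -- all dist (y j) z ≥ d ≥ Dmin y, so Dmin y ≤ term k
    have : Dmin y ≤ Dmin (Function.update y k z) :=
      gen k (Dmin y) (fun j _ => hcase.trans (hk j)) le_rfl
    exact this.trans (Finset.single_le_sum hnn (Finset.mem_univ k))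
  · have B1 : Dmin y - d ≤ Dmin (Function.update y k z) := by
      refine gen k _ (fun j hj => ?_) (by linarith [dist_nonneg (x := y k) (y := z)])
      have h1 : Dmin y ≤ dist (y j) (y k) := Dmin_le y hj
      have h2 : dist (y j) (y k) ≤ dist (y j) z + dist (y k) z := by
        rw [dist_comm (y k) z]; exact dist_triangle _ _ _
      linarith
    have B2 : d ≤ Dmin (Function.update y l z) :=
      gen l d (fun j _ => hk j) hcase.le
    have hsub : ({k, l} : Finset (Fin m)) ⊆ Finset.univ := Finset.subset_univ _
    have hpair : ∑ i ∈ ({k, l} : Finset (Fin m)), Dmin (Function.update y i z)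
        = Dmin (Function.update y k z) + Dmin (Function.update y l z) :=
      Finset.sum_pair hl.symm
    have := Finset.sum_le_sum_of_subset_of_nonneg hsub (fun i _ _ => hnn i (Finset.mem_univ i))
    rw [hpair] at this
    linarith

private lemma Dmin_le_diam [CompactSpace X] (hm : 2 ≤ m) (y : Fin m → X) :
    Dmin y ≤ diam (Set.univ : Set X) := by
  refine (Dmin_le y (i := ⟨0, by omega⟩) (j := ⟨1, by omega⟩) (by simp [Fin.ext_iff])).trans ?_
  exact dist_le_diam_of_mem (isCompact_univ.isBounded) (mem_univ _) (mem_univ _)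

end aux2

private lemma limsup_sum_le' {ι : Type*} (s : Finset ι) (g : ι → ℕ → ℝ) (C : ι → ℝ)
    (h0 : ∀ i ∈ s, ∀ n, 0 ≤ g i n) (hC : ∀ i ∈ s, ∀ n, g i n ≤ C i) :
    Filter.limsup (fun n => ∑ i ∈ s, g i n) Filter.atTop ≤
      ∑ i ∈ s, Filter.limsup (g i) Filter.atTop := by
  induction s using Finset.cons_induction with
  | empty => simp [limsup_const]
  | cons a s ha ih =>
    have h0' : ∀ i ∈ s, ∀ n, 0 ≤ g i n := fun i hi => h0 i (Finset.mem_cons_of_mem hi)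
    have hC' : ∀ i ∈ s, ∀ n, g i n ≤ C i := fun i hi => hC i (Finset.mem_cons_of_mem hi)
    have hb1 : Filter.IsBoundedUnder (· ≥ ·) Filter.atTop (g a) :=
      isBoundedUnder_of ⟨0, fun n => h0 a (Finset.mem_cons_self a s) n⟩
    have hb2 : Filter.IsBoundedUnder (· ≤ ·) Filter.atTop (g a) :=
      isBoundedUnder_of ⟨C a, fun n => hC a (Finset.mem_cons_self a s) n⟩
    have hb3 : Filter.IsCoboundedUnder (· ≤ ·) Filter.atTop (fun n => ∑ i ∈ s, g i n) :=
      Filter.isCoboundedUnder_le_of_le Filter.atTop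
        (x := 0) (fun n => Finset.sum_nonneg (fun i hi => h0' i hi n))
    have hb4 : Filter.IsBoundedUnder (· ≤ ·) Filter.atTop (fun n => ∑ i ∈ s, g i n) :=
      isBoundedUnder_of ⟨∑ i ∈ s, C i, fun n => Finset.sum_le_sum (fun i hi => hC' i hi n)⟩
    calc Filter.limsup (fun n => ∑ i ∈ Finset.cons a s ha, g i n) Filter.atTop
        = Filter.limsup ((g a) + fun n => ∑ i ∈ s, g i n) Filter.atTop := by
          congr 1; funext n; simp [Finset.sum_cons]
      _ ≤ Filter.limsup (g a) Filter.atTop +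
            Filter.limsup (fun n => ∑ i ∈ s, g i n) Filter.atTop :=
          limsup_add_le hb1 hb2 hb3 hb4
      _ ≤ ∑ i ∈ Finset.cons a s ha, Filter.limsup (g i) Filter.atTop := by
          rw [Finset.sum_cons]
          exact add_le_add le_rfl (ih h0' hC')

section main
variable {X : Type*} [MetricSpace X] [CompactSpace X] {m : ℕ}

private lemma avg_nonneg (hm : 2 ≤ m) (φ : X → X) (w : Fin m → X) (n : ℕ) :
    0 ≤ (∑ k ∈ Finset.range n, Dmin (fun j => φ^[k] (w j))) / n :=
  div_nonneg (Finset.sum_nonneg fun k _ => Dmin_nonneg hm _) (Nat.cast_nonneg n)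

private lemma avg_le_diam (hm : 2 ≤ m) (φ : X → X) (w : Fin m → X) (n : ℕ) :
    (∑ k ∈ Finset.range n, Dmin (fun j => φ^[k] (w j))) / n ≤ diam (Set.univ : Set X) := by
  rcases Nat.eq_zero_or_pos n with rfl | hn
  · simpa using diam_nonneg
  · rw [div_le_iff₀ (by exact_mod_cast hn)]
    calc ∑ k ∈ Finset.range n, Dmin (fun j => φ^[k] (w j))
        ≤ ∑ _k ∈ Finset.range n, diam (Set.univ : Set X) :=
          Finset.sum_le_sum fun k _ => Dmin_le_diam hm _
      _ = diam (Set.univ : Set X) * n := by simp [mul_comm]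

end main

theorem stmt3 {X : Type*} [MetricSpace X] [CompactSpace X] {m : ℕ} (hm : 2 ≤ m)
    (φ : X → X) (hφ : IsHomeomorph φ) :
    (∀ (x : Fin m → X) (σ : Equiv.Perm (Fin m)), DBar φ (x ∘ σ) = DBar φ x) ∧
    (∀ x : X, DBar φ (fun _ : Fin m => x) = 0) ∧
    (∀ (x : Fin m → X) (z : X), DBar φ x ≤ ∑ i : Fin m, DBar φ (Function.update x i z)) := by
  refine ⟨?_, ?_, ?_⟩
  · intro x σ
    unfold DBar
    congr 1
    funext n
    congr 1
    apply Finset.sum_congr rfl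
    intro k _
    exact Dmin_comp_perm (fun j => φ^[k] (x j)) σ
  · intro x
    unfold DBar
    have : (fun n : ℕ => (∑ i ∈ Finset.range n,
        Dmin (fun _ : Fin m => φ^[i] x)) / n) = fun _ => (0:ℝ) := by
      funext n
      rw [Finset.sum_congr rfl (fun k _ => Dmin_const hm (φ^[k] x))]
      simp
    rw [this, limsup_const]
  · intro x z
    set C := diam (Set.univ : Set X)
    set F := fun n : ℕ => (∑ k ∈ Finset.range n, Dmin (fun j => φ^[k] (x j))) / n with hF
    set G := fun (i : Fin m) (n : ℕ) =>
      (∑ k ∈ Finset.range n, Dmin (fun j => φ^[k] (Function.update x i z j))) / n with hG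
    have hpt : ∀ n, F n ≤ ∑ i : Fin m, G i n := by
      intro n
      have hsum : ∑ k ∈ Finset.range n, Dmin (fun j => φ^[k] (x j))
          ≤ ∑ k ∈ Finset.range n, ∑ i : Fin m,
              Dmin (fun j => φ^[k] (Function.update x i z j)) := by
        apply Finset.sum_le_sum
        intro k _
        have := Dmin_polygon hm (fun j => φ^[k] (x j)) (φ^[k] z)
        refine this.trans (le_of_eq (Finset.sum_congr rfl fun i _ => ?_))
        congr 1
        funext j
        by_cases hj : j = i
        · subst hj; simp
        · simp [Function.update_of_ne hj]
      calc F n ≤ (∑ k ∈ Finset.range n, ∑ i : Fin m,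
              Dmin (fun j => φ^[k] (Function.update x i z j))) / n :=
            div_le_div_of_nonneg_right hsum (Nat.cast_nonneg n)
        _ = ∑ i : Fin m, G i n := by
            rw [Finset.sum_comm, Finset.sum_div]
    have h1 : Filter.limsup F Filter.atTop ≤
        Filter.limsup (fun n => ∑ i : Fin m, G i n) Filter.atTop := by
      refine Filter.limsup_le_limsup (Filter.Eventually.of_forall hpt)
        (Filter.isCoboundedUnder_le_of_le Filter.atTop (x := 0)
          (fun n => avg_nonneg hm φ x n))
        (isBoundedUnder_of ⟨m * C, fun n => by
          refine (Finset.sum_le_sum fun i _ => avg_le_diam hm φ (Function.update x i z) n).trans ?_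
          simp [C]⟩)
    have h2 := limsup_sum_le' Finset.univ G (fun _ => C)
      (fun i _ n => avg_nonneg hm φ _ n) (fun i _ n => avg_le_diam hm φ _ n)
    exact h1.trans h2
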